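/- Fix β > 0, a positive definite d_S×d_S density matrix ρ_S, Hermitian matrices H_B (d_B×d_B, the bath Hamiltonian) and H_SB (on the joint space, the interaction Hamiltonian); let ρ_B^(th) = exp(-βH_B)/tr(exp(-βH_B)), K = -(log ρ_S)⊗I_B + β I_S⊗H_B, f = exp(-K)/tr(exp(-K)) = ρ_S⊗ρ_B^(th), and g(X) = -f·(∫_0^1 exp(γK) X exp(-γK) dγ - tr(X f)·I). Define δΛ = -tr_B{(I_S⊗ρ_B^(th)) βH_SB} and the linear-response correction δf = g(δΛ⊗I_B) + g(βH_SB). Then tr_B{δf} = 0; that is, δΛ = -tr_B{ρ_B^(th) βH_SB} solves the consistency equation enforcing tr_B{ρ^(ME)} = ρ_S at linear order in βH_SB. (Paper's Proposition: the maximum-entropy state for weak system-bath coupling at fixed temperature T = 1/(βk) is ρ^(ME) = exp(-Λ_0 - δΛ - βH)/tr{...} with Λ_0 = -log ρ_S - βH_S and δΛ = -tr_B{ρ_B^(th) βH_SB}, to linear order in βH_SB.) -/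

import Mathlib

open Matrix Kronecker NormedSpace MeasureTheory
open scoped ComplexOrder

attribute [local instance] Matrix.normedAddCommGroup Matrix.normedSpace

/-- The von Neumann entropy `S(ρ) = -∑ᵢ λᵢ log λᵢ` of a (Hermitian) matrix,
with the convention `0 log 0 = 0` (note `Real.log 0 = 0`); junk value `0` for
non-Hermitian matrices. -/
noncomputable def vnEntropy {n : Type*} [Fintype n] [DecidableEq n] (ρ : Matrix n n ℂ) : ℝ :=
  if h : ρ.IsHermitian then -∑ i, h.eigenvalues i * Real.log (h.eigenvalues i) else 0

/-- The trace norm `‖X‖₁ = tr √(XᴴX)`. -/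
noncomputable def traceNorm {n : Type*} [Fintype n] [DecidableEq n] (X : Matrix n n ℂ) : ℝ :=
  (((Matrix.posSemidef_conjTranspose_mul_self X).1.eigenvectorUnitary : Matrix n n ℂ) *
    Matrix.diagonal (((↑) : ℝ → ℂ) ∘ (fun x : ℝ => √x) ∘ (Matrix.posSemidef_conjTranspose_mul_self X).1.eigenvalues) *
    (star (Matrix.posSemidef_conjTranspose_mul_self X).1.eigenvectorUnitary : Matrix n n ℂ)).trace.re

/-- Partial trace over the bath (second) factor. -/
noncomputable def ptraceB {S B : Type*} [Fintype B] (X : Matrix (S × B) (S × B) ℂ) :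
    Matrix S S ℂ :=
  Matrix.of fun s s' => ∑ b, X (s, b) (s', b)

/-- Partial trace over the system (first) factor. -/
noncomputable def ptraceS {S B : Type*} [Fintype S] (X : Matrix (S × B) (S × B) ℂ) :
    Matrix B B ℂ :=
  Matrix.of fun b b' => ∑ s, X (s, b) (s, b')

/-- Matrix logarithm via the functional calculus (spectral decomposition);
junk value `0` for non-Hermitian matrices. -/
noncomputable def mlog {n : Type*} [Fintype n] [DecidableEq n] (ρ : Matrix n n ℂ) :
    Matrix n n ℂ :=
  if h : ρ.IsHermitian then
    (h.eigenvectorUnitary : Matrix n n ℂ) *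
      Matrix.diagonal (fun i => (Real.log (h.eigenvalues i) : ℂ)) *
      star (h.eigenvectorUnitary : Matrix n n ℂ)
  else 0

/-- Real matrix power `ρ^γ` via the functional calculus (spectral decomposition);
junk value `0` for non-Hermitian matrices. -/
noncomputable def mrpow {n : Type*} [Fintype n] [DecidableEq n] (ρ : Matrix n n ℂ) (γ : ℝ) :
    Matrix n n ℂ :=
  if h : ρ.IsHermitian then
    (h.eigenvectorUnitary : Matrix n n ℂ) *
      Matrix.diagonal (fun i => ((h.eigenvalues i ^ γ : ℝ) : ℂ)) *
      star (h.eigenvectorUnitary : Matrix n n ℂ)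
  else 0


section Aux

noncomputable def kronRightAH (S B : Type*) [Fintype S] [DecidableEq S] [Fintype B] [DecidableEq B] :
    Matrix S S ℂ →ₐ[ℂ] Matrix (S × B) (S × B) ℂ where
  toFun A := A ⊗ₖ (1 : Matrix B B ℂ)
  map_one' := Matrix.one_kronecker_one
  map_mul' A B := by rw [← Matrix.mul_kronecker_mul, one_mul]
  map_zero' := Matrix.zero_kronecker _
  map_add' A B := Matrix.add_kronecker _ _ _
  commutes' c := by
    simp [Algebra.algebraMap_eq_smul_one, Matrix.smul_kronecker, Matrix.one_kronecker_one]

noncomputable def kronLeftAH (S B : Type*) [Fintype S] [DecidableEq S] [Fintype B] [DecidableEq B] :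
    Matrix B B ℂ →ₐ[ℂ] Matrix (S × B) (S × B) ℂ where
  toFun B' := (1 : Matrix S S ℂ) ⊗ₖ B'
  map_one' := Matrix.one_kronecker_one
  map_mul' A B := by rw [← Matrix.mul_kronecker_mul, one_mul]
  map_zero' := Matrix.kronecker_zero _
  map_add' A B := Matrix.kronecker_add _ _ _
  commutes' c := by
    simp [Algebra.algebraMap_eq_smul_one, Matrix.kronecker_smul, Matrix.one_kronecker_one]

lemma exp_kron {S B : Type*} [Fintype S] [DecidableEq S] [Fintype B] [DecidableEq B]
    (A : Matrix S S ℂ) (M : Matrix B B ℂ) :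
    exp (A ⊗ₖ (1 : Matrix B B ℂ) + (1 : Matrix S S ℂ) ⊗ₖ M) = exp A ⊗ₖ exp M := by
  have hc : Commute (A ⊗ₖ (1 : Matrix B B ℂ)) ((1 : Matrix S S ℂ) ⊗ₖ M) := by
    unfold Commute SemiconjBy
    rw [← Matrix.mul_kronecker_mul, ← Matrix.mul_kronecker_mul, one_mul, mul_one, one_mul, mul_one]
  have h1 : exp (A ⊗ₖ (1 : Matrix B B ℂ)) = exp A ⊗ₖ (1 : Matrix B B ℂ) := by
    open scoped Matrix.Norms.Operator in exact (map_exp (kronRightAH S B)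
      (kronRightAH S B).toLinearMap.continuous_of_finiteDimensional A).symm
  have h2 : exp ((1 : Matrix S S ℂ) ⊗ₖ M) = (1 : Matrix S S ℂ) ⊗ₖ exp M := by
    open scoped Matrix.Norms.Operator in exact (map_exp (kronLeftAH S B)
      (kronLeftAH S B).toLinearMap.continuous_of_finiteDimensional M).symm
  rw [Matrix.exp_add_of_commute _ _ hc, h1, h2, ← Matrix.mul_kronecker_mul, one_mul, mul_one]

lemma exp_unitary_conj_diag {n : Type*} [Fintype n] [DecidableEq n]
    (U : Matrix.unitaryGroup n ℂ) (v : n → ℂ) :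
    exp ((U : Matrix n n ℂ) * Matrix.diagonal v * star (U : Matrix n n ℂ)) =
      (U : Matrix n n ℂ) * Matrix.diagonal (fun i => Complex.exp (v i)) * star (U : Matrix n n ℂ) := by
  have hU : IsUnit (U : Matrix n n ℂ) :=
    (Matrix.isUnit_iff_isUnit_det _).mpr (Matrix.isUnit_det_of_right_inverse (Matrix.mem_unitaryGroup_iff.mp U.2))
  have hinv : (U : Matrix n n ℂ)⁻¹ = star (U : Matrix n n ℂ) :=
    Matrix.inv_eq_right_inv (Matrix.mem_unitaryGroup_iff.mp U.2)
  have hv : exp v = fun i => Complex.exp (v i) := by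
    funext i; rw [Pi.coe_exp, ← Complex.exp_eq_exp_ℂ]
  rw [← hinv, Matrix.exp_conj _ _ hU, Matrix.exp_diagonal, hv, hinv]

lemma smul_conj_diag {n : Type*} [Fintype n] [DecidableEq n]
    (U : Matrix n n ℂ) (v : n → ℂ) (c : ℂ) :
    c • (U * Matrix.diagonal v * star U) = U * Matrix.diagonal (fun i => c * v i) * star U := by
  have : (fun i => c * v i) = c • v := rfl
  rw [this, Matrix.diagonal_smul, Matrix.mul_smul, Matrix.smul_mul]

lemma exp_smul_hermitian {n : Type*} [Fintype n] [DecidableEq n]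
    {M : Matrix n n ℂ} (h : M.IsHermitian) (c : ℂ) :
    exp (c • M) =
      (h.eigenvectorUnitary : Matrix n n ℂ) *
        Matrix.diagonal (fun i => Complex.exp (c * h.eigenvalues i)) *
        star (h.eigenvectorUnitary : Matrix n n ℂ) := by
  conv_lhs => rw [h.spectral_theorem, Unitary.conjStarAlgAut_apply, smul_conj_diag]
  rw [exp_unitary_conj_diag]
  rfl

lemma exp_mlog {n : Type*} [Fintype n] [DecidableEq n]
    {ρ : Matrix n n ℂ} (hρ : ρ.PosDef) :
    exp (mlog ρ) = ρ := by
  rw [mlog, dif_pos hρ.isHermitian, exp_unitary_conj_diag]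
  have : (fun i => Complex.exp ((Real.log (hρ.isHermitian.eigenvalues i) : ℂ))) =
      (RCLike.ofReal ∘ hρ.isHermitian.eigenvalues) := by
    funext i
    rw [← Complex.ofReal_exp, Real.exp_log (hρ.eigenvalues_pos i)]
    rfl
  rw [this]; exact hρ.isHermitian.spectral_theorem.symm

lemma exp_smul_mul_exp_smul {n : Type*} [Fintype n] [DecidableEq n]
    (M : Matrix n n ℂ) (x y : ℂ) :
    exp (x • M) * exp (y • M) = exp ((x + y) • M) := by
  rw [add_smul, Matrix.exp_add_of_commute]
  exact ((Commute.refl M).smul_left x).smul_right y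

lemma trace_exp_smul_hermitian {n : Type*} [Fintype n] [DecidableEq n]
    {M : Matrix n n ℂ} (h : M.IsHermitian) (c : ℝ) :
    (exp ((c : ℂ) • M)).trace = ∑ i, (Real.exp (c * h.eigenvalues i) : ℂ) := by
  rw [exp_smul_hermitian h, Matrix.trace_mul_cycle, Matrix.UnitaryGroup.star_mul_self,
    Matrix.one_mul, Matrix.trace_diagonal]
  congr 1; funext i
  rw [← Complex.ofReal_mul, ← Complex.ofReal_exp]

variable {S B : Type*} [Fintype S] [DecidableEq S] [Fintype B] [DecidableEq B]

lemma ptraceB_add (X Y : Matrix (S × B) (S × B) ℂ) :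
    ptraceB (X + Y) = ptraceB X + ptraceB Y := by
  ext s s'; simp [ptraceB, Finset.sum_add_distrib]

lemma ptraceB_smul (c : ℂ) (X : Matrix (S × B) (S × B) ℂ) :
    ptraceB (c • X) = c • ptraceB X := by
  ext s s'; simp [ptraceB, Finset.mul_sum]

lemma ptraceB_sub (X Y : Matrix (S × B) (S × B) ℂ) :
    ptraceB (X - Y) = ptraceB X - ptraceB Y := by
  ext s s'; simp [ptraceB, Finset.sum_sub_distrib]

lemma ptraceB_neg (X : Matrix (S × B) (S × B) ℂ) : ptraceB (-X) = -ptraceB X := by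
  ext s s'; simp [ptraceB]

lemma ptraceB_kron (A : Matrix S S ℂ) (M : Matrix B B ℂ) :
    ptraceB (A ⊗ₖ M) = M.trace • A := by
  ext s s'
  simp [ptraceB, Matrix.trace, Matrix.diag, Finset.sum_mul, mul_comm, ← Finset.mul_sum]

lemma ptraceB_kron_one_mul (A : Matrix S S ℂ) (X : Matrix (S × B) (S × B) ℂ) :
    ptraceB ((A ⊗ₖ (1 : Matrix B B ℂ)) * X) = A * ptraceB X := by
  ext s s'
  simp only [ptraceB, Matrix.mul_apply, Matrix.of_apply, Matrix.kroneckerMap_apply,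
    Fintype.sum_prod_type, Matrix.one_apply, mul_ite, mul_one, mul_zero, ite_mul, zero_mul,
    Finset.sum_ite_eq, Finset.mem_univ, if_true, Finset.mul_sum]
  rw [Finset.sum_comm]

lemma ptraceB_mul_kron_one (C : Matrix S S ℂ) (X : Matrix (S × B) (S × B) ℂ) :
    ptraceB (X * (C ⊗ₖ (1 : Matrix B B ℂ))) = ptraceB X * C := by
  ext s s'
  simp only [ptraceB, Matrix.mul_apply, Matrix.of_apply, Matrix.kroneckerMap_apply,
    Fintype.sum_prod_type, Matrix.one_apply, mul_ite, mul_one, mul_zero, ite_mul, zero_mul,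
    Finset.sum_ite_eq', Finset.mem_univ, if_true, Finset.sum_mul]
  rw [Finset.sum_comm]

lemma ptraceB_one_kron_mul_comm (M : Matrix B B ℂ) (X : Matrix (S × B) (S × B) ℂ) :
    ptraceB (((1 : Matrix S S ℂ) ⊗ₖ M) * X) = ptraceB (X * ((1 : Matrix S S ℂ) ⊗ₖ M)) := by
  ext s s'
  have hL : ∀ b : B, (((1 : Matrix S S ℂ) ⊗ₖ M) * X) (s, b) (s', b)
      = ∑ b', M b b' * X (s, b') (s', b) := by
    intro b
    rw [Matrix.mul_apply, ← Finset.univ_product_univ, Finset.sum_product_right]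
    simp [Matrix.one_apply, ite_mul, Finset.sum_ite_eq]
  have hR : ∀ b : B, (X * ((1 : Matrix S S ℂ) ⊗ₖ M)) (s, b) (s', b)
      = ∑ b', X (s, b) (s', b') * M b' b := by
    intro b
    rw [Matrix.mul_apply, ← Finset.univ_product_univ, Finset.sum_product_right]
    simp [Matrix.one_apply, mul_ite, Finset.sum_ite_eq']
  simp only [ptraceB, Matrix.of_apply, hL, hR]
  rw [Finset.sum_comm]
  exact Finset.sum_congr rfl fun b _ => Finset.sum_congr rfl fun b' _ => mul_comm _ _

lemma trace_ptraceB (X : Matrix (S × B) (S × B) ℂ) : (ptraceB X).trace = X.trace := by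
  simp [ptraceB, Matrix.trace, Matrix.diag, Fintype.sum_prod_type]

end Aux

/-- paper's Proposition, consistency equation. With
`K = -(log ρ_S)⊗I_B + β I_S⊗H_B`, `f = exp(-K)/tr(exp(-K))`,
`g(X) = -f·(∫₀¹ e^{γK} X e^{-γK} dγ - tr(Xf)·I)`,
`δΛ = -tr_B{(I_S⊗ρ_B^(th)) βH_SB}` and the linear-response correction
`δf = g(δΛ⊗I_B) + g(βH_SB)`, one has `tr_B{δf} = 0`. -/
theorem deltaLambda_solves_consistency {dS dB : ℕ} (β : ℝ) (hβ : 0 < β)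
    (ρS : Matrix (Fin dS) (Fin dS) ℂ) (hρS : ρS.PosDef) (hρS1 : ρS.trace = 1)
    (HB : Matrix (Fin dB) (Fin dB) ℂ) (hHB : HB.IsHermitian)
    (HSB : Matrix (Fin dS × Fin dB) (Fin dS × Fin dB) ℂ) (hHSB : HSB.IsHermitian)
    (ρBth : Matrix (Fin dB) (Fin dB) ℂ)
    (hρBth : ρBth = (exp (-((β : ℂ) • HB))).trace⁻¹ • exp (-((β : ℂ) • HB)))
    (K : Matrix (Fin dS × Fin dB) (Fin dS × Fin dB) ℂ)
    (hK : K = -(mlog ρS ⊗ₖ (1 : Matrix (Fin dB) (Fin dB) ℂ)) +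
      (β : ℂ) • ((1 : Matrix (Fin dS) (Fin dS) ℂ) ⊗ₖ HB))
    (f : Matrix (Fin dS × Fin dB) (Fin dS × Fin dB) ℂ)
    (hf : f = (exp (-K)).trace⁻¹ • exp (-K))
    (g : Matrix (Fin dS × Fin dB) (Fin dS × Fin dB) ℂ →
      Matrix (Fin dS × Fin dB) (Fin dS × Fin dB) ℂ)
    (hg : ∀ X, g X = -(f * ((∫ γ in (0:ℝ)..1, exp (γ • K) * X * exp (-(γ • K))) -
      (X * f).trace • (1 : Matrix (Fin dS × Fin dB) (Fin dS × Fin dB) ℂ))))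
    (δΛ : Matrix (Fin dS) (Fin dS) ℂ)
    (hδΛ : δΛ = -ptraceB (((1 : Matrix (Fin dS) (Fin dS) ℂ) ⊗ₖ ρBth) * ((β : ℂ) • HSB)))
    (δf : Matrix (Fin dS × Fin dB) (Fin dS × Fin dB) ℂ)
    (hδf : δf = g (δΛ ⊗ₖ (1 : Matrix (Fin dB) (Fin dB) ℂ)) + g ((β : ℂ) • HSB)) :
    ptraceB δf = 0 := by
  -- trivial if the bath is empty
  rcases Nat.eq_zero_or_pos dB with h0 | hdB
  · subst h0
    ext s s'
    simp [ptraceB]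
  haveI : Nonempty (Fin dB) := ⟨⟨0, hdB⟩⟩
  -- real smul is complex smul
  have hsm : ∀ (γ : ℝ) (M : Matrix (Fin dS × Fin dB) (Fin dS × Fin dB) ℂ),
      γ • M = ((γ : ℂ)) • M := by
    intro γ M; ext i j; simp [Matrix.smul_apply, Complex.real_smul]
  set A₀ : Matrix (Fin dS) (Fin dS) ℂ := -(mlog ρS) with hA₀
  set B₀ : Matrix (Fin dB) (Fin dB) ℂ := (β : ℂ) • HB with hB₀
  have hK' : K = A₀ ⊗ₖ (1 : Matrix (Fin dB) (Fin dB) ℂ) +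
      (1 : Matrix (Fin dS) (Fin dS) ℂ) ⊗ₖ B₀ := by
    rw [hK, hA₀, hB₀, ← Matrix.kronecker_smul]
    congr 1
    ext ⟨s, b⟩ ⟨s', b'⟩
    simp [Matrix.kroneckerMap_apply, Matrix.neg_apply]
  -- exponentials of multiples of K factorize
  have hexpK : ∀ c : ℂ, exp (c • K) = exp (c • A₀) ⊗ₖ exp (c • B₀) := by
    intro c
    rw [hK', smul_add, ← Matrix.smul_kronecker, ← Matrix.kronecker_smul, exp_kron]
  set E : Matrix (Fin dB) (Fin dB) ℂ := exp (-B₀) with hE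
  have hnegK : exp (-K) = ρS ⊗ₖ E := by
    rw [← neg_one_smul ℂ K, hexpK, neg_one_smul, neg_one_smul, hA₀, neg_neg,
      exp_mlog hρS, hE]
  set t : ℂ := E.trace with ht
  have htreal : t = ((∑ i, Real.exp (-β * hHB.eigenvalues i) : ℝ) : ℂ) := by
    rw [ht, hE, hB₀]
    have : -((β : ℂ) • HB) = (((-β : ℝ) : ℂ)) • HB := by
      push_cast; rw [neg_smul]
    rw [this, trace_exp_smul_hermitian hHB, Complex.ofReal_sum]
  have ht0 : t ≠ 0 := by
    rw [htreal]
    exact Complex.ofReal_ne_zero.mpr (ne_of_gt (Finset.sum_pos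
      (fun i _ => Real.exp_pos _) Finset.univ_nonempty))
  have hρBth' : ρBth = t⁻¹ • E := hρBth
  have htrK : (exp (-K)).trace = t := by
    rw [hnegK, Matrix.trace_kronecker, hρS1, one_mul, ht]
  have hfρ : f = ρS ⊗ₖ ρBth := by
    rw [hf, htrK, hnegK, hρBth', Matrix.kronecker_smul]
  have hρBtr : ρBth.trace = 1 := by
    rw [hρBth', Matrix.trace_smul, ht, smul_eq_mul, inv_mul_cancel₀ ht0]
  -- conjugation of ρBth by bath exponentials
  have hDB : ∀ c : ℂ, exp ((-c) • B₀) * (ρBth * exp (c • B₀)) = ρBth := by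
    intro c
    rw [hρBth', hE, ← neg_one_smul ℂ B₀, Matrix.smul_mul, Matrix.mul_smul,
      ← Matrix.mul_assoc, exp_smul_mul_exp_smul, exp_smul_mul_exp_smul]
    ring_nf
  have hδΛ' : ptraceB (((1 : Matrix (Fin dS) (Fin dS) ℂ) ⊗ₖ ρBth) * ((β : ℂ) • HSB))
      = -δΛ := by rw [hδΛ, neg_neg]
  -- the two trace scalars cancel
  have hc₁ : ((δΛ ⊗ₖ (1 : Matrix (Fin dB) (Fin dB) ℂ)) * f).trace = (δΛ * ρS).trace := by
    rw [hfρ, ← Matrix.mul_kronecker_mul, Matrix.trace_kronecker, one_mul, hρBtr, mul_one]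
  have hc₂ : (((β : ℂ) • HSB) * f).trace = -(δΛ * ρS).trace := by
    have hsplit : ρS ⊗ₖ ρBth = ((1 : Matrix (Fin dS) (Fin dS) ℂ) ⊗ₖ ρBth) *
        (ρS ⊗ₖ (1 : Matrix (Fin dB) (Fin dB) ℂ)) := by
      rw [← Matrix.mul_kronecker_mul, one_mul, mul_one]
    rw [hfρ, ← trace_ptraceB, hsplit, ← Matrix.mul_assoc, ptraceB_mul_kron_one,
      ← ptraceB_one_kron_mul_comm, hδΛ', Matrix.neg_mul, Matrix.trace_neg]
  -- the key pointwise computation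
  have key : ∀ (γ : ℝ) (X : Matrix (Fin dS × Fin dB) (Fin dS × Fin dB) ℂ),
      ptraceB (f * (exp (γ • K) * X * exp (-(γ • K)))) =
        (ρS * exp ((γ : ℂ) • A₀)) * ptraceB
          (X * ((1 : Matrix (Fin dS) (Fin dS) ℂ) ⊗ₖ ρBth)) * exp ((-(γ : ℂ)) • A₀) := by
    intro γ X
    have h1 : -(γ • K) = (-(γ : ℂ)) • K := by
      rw [hsm]; exact (neg_smul _ _).symm
    rw [h1, hsm, hexpK, hexpK]
    have hfe : f * (exp ((γ : ℂ) • A₀) ⊗ₖ exp ((γ : ℂ) • B₀)) =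
        (ρS * exp ((γ : ℂ) • A₀)) ⊗ₖ (ρBth * exp ((γ : ℂ) • B₀)) := by
      rw [hfρ, ← Matrix.mul_kronecker_mul]
    have hsplitL : (ρS * exp ((γ : ℂ) • A₀)) ⊗ₖ (ρBth * exp ((γ : ℂ) • B₀)) =
        ((ρS * exp ((γ : ℂ) • A₀)) ⊗ₖ (1 : Matrix (Fin dB) (Fin dB) ℂ)) *
          ((1 : Matrix (Fin dS) (Fin dS) ℂ) ⊗ₖ (ρBth * exp ((γ : ℂ) • B₀))) := by
      rw [← Matrix.mul_kronecker_mul, one_mul, mul_one]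
    have hsplitR : exp ((-(γ : ℂ)) • A₀) ⊗ₖ exp ((-(γ : ℂ)) • B₀) =
        ((1 : Matrix (Fin dS) (Fin dS) ℂ) ⊗ₖ exp ((-(γ : ℂ)) • B₀)) *
          (exp ((-(γ : ℂ)) • A₀) ⊗ₖ (1 : Matrix (Fin dB) (Fin dB) ℂ)) := by
      rw [← Matrix.mul_kronecker_mul, one_mul, mul_one]
    calc ptraceB (f * (exp ((γ : ℂ) • A₀) ⊗ₖ exp ((γ : ℂ) • B₀) * X *
            (exp ((-(γ : ℂ)) • A₀) ⊗ₖ exp ((-(γ : ℂ)) • B₀))))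
        = ptraceB (((ρS * exp ((γ : ℂ) • A₀)) ⊗ₖ (1 : Matrix (Fin dB) (Fin dB) ℂ)) *
            ((((1 : Matrix (Fin dS) (Fin dS) ℂ) ⊗ₖ (ρBth * exp ((γ : ℂ) • B₀))) * X *
              ((1 : Matrix (Fin dS) (Fin dS) ℂ) ⊗ₖ exp ((-(γ : ℂ)) • B₀))) *
            (exp ((-(γ : ℂ)) • A₀) ⊗ₖ (1 : Matrix (Fin dB) (Fin dB) ℂ)))) := by
          rw [← Matrix.mul_assoc, ← Matrix.mul_assoc, hfe, hsplitL, hsplitR]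
          simp only [Matrix.mul_assoc]
      _ = (ρS * exp ((γ : ℂ) • A₀)) * ptraceB
            ((((1 : Matrix (Fin dS) (Fin dS) ℂ) ⊗ₖ (ρBth * exp ((γ : ℂ) • B₀))) * X *
              ((1 : Matrix (Fin dS) (Fin dS) ℂ) ⊗ₖ exp ((-(γ : ℂ)) • B₀)))) *
            exp ((-(γ : ℂ)) • A₀) := by
          rw [ptraceB_kron_one_mul, ptraceB_mul_kron_one]
          exact (Matrix.mul_assoc _ _ _).symm
      _ = (ρS * exp ((γ : ℂ) • A₀)) * ptraceB
            (X * ((1 : Matrix (Fin dS) (Fin dS) ℂ) ⊗ₖ ρBth)) * exp ((-(γ : ℂ)) • A₀) := by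
          congr 2
          rw [Matrix.mul_assoc, ptraceB_one_kron_mul_comm, Matrix.mul_assoc,
            ← Matrix.mul_kronecker_mul, one_mul, hDB]
  -- partial trace of f
  have hptf : ptraceB f = ρS := by
    rw [hfρ, ptraceB_kron, hρBtr, one_smul]
  -- continuous linear map M ↦ ptraceB (f * M)
  let Lp : Matrix (Fin dS × Fin dB) (Fin dS × Fin dB) ℂ →ₗ[ℂ] Matrix (Fin dS) (Fin dS) ℂ :=
    { toFun := fun M => ptraceB (f * M)
      map_add' := fun M N => by
        show ptraceB (f * (M + N)) = ptraceB (f * M) + ptraceB (f * N)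
        rw [Matrix.mul_add, ptraceB_add]
      map_smul' := fun c M => by
        show ptraceB (f * (c • M)) = c • ptraceB (f * M)
        rw [Matrix.mul_smul, ptraceB_smul] }
  let L := LinearMap.toContinuousLinearMap Lp
  have hLapp : ∀ M, L M = ptraceB (f * M) := fun M => rfl
  -- integrability of the integrand
  have hcont : ∀ X : Matrix (Fin dS × Fin dB) (Fin dS × Fin dB) ℂ,
      Continuous fun γ : ℝ => exp (γ • K) * X * exp (-(γ • K)) := by
    intro X
    have e1 : (fun γ : ℝ => exp (γ • K)) = fun γ : ℝ => exp ((γ : ℂ) • K) := by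
      funext γ; rw [hsm]
    have e2 : (fun γ : ℝ => exp (-(γ • K))) = fun γ : ℝ => exp (-((γ : ℂ) • K)) := by
      funext γ; rw [hsm]
    have h1 : Continuous fun γ : ℝ => exp (γ • K) := by
      rw [e1]
      open scoped Matrix.Norms.Operator in exact exp_continuous.comp (Complex.continuous_ofReal.smul continuous_const)
    have h2 : Continuous fun γ : ℝ => exp (-(γ • K)) := by
      rw [e2]
      open scoped Matrix.Norms.Operator in exact exp_continuous.comp ((Complex.continuous_ofReal.smul continuous_const).neg)
    exact (h1.mul continuous_const).mul h2
  -- commute ptraceB ∘ (f * ·) with the integral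
  have hptgf : ∀ X : Matrix (Fin dS × Fin dB) (Fin dS × Fin dB) ℂ,
      ptraceB (f * (∫ γ in (0:ℝ)..1, exp (γ • K) * X * exp (-(γ • K))))
        = ∫ γ in (0:ℝ)..1, ptraceB (f * (exp (γ • K) * X * exp (-(γ • K)))) := by
    intro X
    rw [← hLapp]
    exact (ContinuousLinearMap.intervalIntegral_comp_comm L ((hcont X).intervalIntegrable 0 1)).symm
  -- partial trace of g X
  have hgp : ∀ X : Matrix (Fin dS × Fin dB) (Fin dS × Fin dB) ℂ,
      ptraceB (g X) =
        -(∫ γ in (0:ℝ)..1, ptraceB (f * (exp (γ • K) * X * exp (-(γ • K)))))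
          + (X * f).trace • ρS := by
    intro X
    rw [hg]
    have hexpand : f * ((∫ γ in (0:ℝ)..1, exp (γ • K) * X * exp (-(γ • K)))
          - (X * f).trace • 1)
        = f * (∫ γ in (0:ℝ)..1, exp (γ • K) * X * exp (-(γ • K)))
          - (X * f).trace • f := by
      rw [Matrix.mul_sub, Matrix.mul_smul, Matrix.mul_one]
    rw [hexpand, ptraceB_neg, ptraceB_sub, ptraceB_smul, hptgf, hptf, neg_sub,
      sub_eq_neg_add]
  -- evaluate the two inner partial traces
  have hX₁ : ptraceB ((δΛ ⊗ₖ (1 : Matrix (Fin dB) (Fin dB) ℂ)) *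
      ((1 : Matrix (Fin dS) (Fin dS) ℂ) ⊗ₖ ρBth)) = δΛ := by
    rw [← Matrix.mul_kronecker_mul, mul_one, one_mul, ptraceB_kron, hρBtr, one_smul]
  have hX₂ : ptraceB (((β : ℂ) • HSB) *
      ((1 : Matrix (Fin dS) (Fin dS) ℂ) ⊗ₖ ρBth)) = -δΛ := by
    rw [← ptraceB_one_kron_mul_comm, hδΛ']
  -- the two integrands are negatives of each other
  have hneg : (fun γ : ℝ => ptraceB (f * (exp (γ • K) * ((β : ℂ) • HSB) *
        exp (-(γ • K)))))
      = fun γ : ℝ => -(ptraceB (f * (exp (γ • K) *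
          (δΛ ⊗ₖ (1 : Matrix (Fin dB) (Fin dB) ℂ)) * exp (-(γ • K))))) := by
    funext γ
    rw [key, key, hX₁, hX₂, Matrix.mul_neg, Matrix.neg_mul]
  rw [hδf, ptraceB_add, hgp, hgp, hneg, intervalIntegral.integral_neg, neg_neg,
    hc₁, hc₂, neg_smul]
  abel
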